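/- Let Γ, Γ', Δ be finite groups acting on sets U, U', V respectively, let ρ : Γ → Δ and ρ' : Γ' → Δ be homomorphisms, and let f : U → V, f' : U' → V be ρ- and ρ'-equivariant maps. Then there is a canonical bijection between the quotient set ((U × U') ×_{f×f', V×V, π} (V × Δ))/(Γ × Γ'), where π(v,δ) = (v, δ·v) and (γ,γ') acts by ((u,u'),(v,δ)) ↦ ((γ·u, γ'·u'), (ρ(γ)·v, ρ(γ) δ ρ'(γ')⁻¹)), and the set of triples { ([u],[u'],D) : u ∈ U, u' ∈ U', [f(u)] = [f'(u')] in V/Δ, D a double coset in f-related stabilizer data }, namely the set {(p,p',D) : p ∈ U/Γ, p' ∈ U'/Γ', images in V/Δ agree, D ∈ appropriate double coset space} described by the orbifold fibre product formula. -/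

import Mathlib

/-!
A point `((u, u'), (v, δ))` of the fibre product is determined by the triple `(u, u', δ)`,
since `v = f u`; under this identification the `Γ × Γ'`-action becomes
`(u, u', δ) ↦ (γ • u, γ' • u', ρ γ * δ * (ρ' γ')⁻¹)`. Twisting `δ` further by stabilizers of
the new points changes nothing, because a stabilizer element `σ` of `γ • u` can be absorbed
into `γ` (replace `γ` by `σ * γ`). So the two relations agree under the identification.
-/

section

variable {Γ Γ' Δ U U' V : Type*} [Group Γ] [Group Γ'] [Group Δ]
  [MulAction Γ U] [MulAction Γ' U'] [MulAction Δ V]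

lemma exists_smul_stabilizer_twist_iff (ρ : Γ →* Δ) (ρ' : Γ' →* Δ)
    (u₁ u₂ : U) (u₁' u₂' : U') (δ₁ δ₂ : Δ) :
    (∃ (γ : Γ) (γ' : Γ') (σ : Γ) (σ' : Γ'), u₂ = γ • u₁ ∧ u₂' = γ' • u₁' ∧
        σ • u₂ = u₂ ∧ σ' • u₂' = u₂' ∧ δ₂ = ρ σ * (ρ γ * δ₁ * (ρ' γ')⁻¹) * (ρ' σ')⁻¹) ↔
      ∃ (γ : Γ) (γ' : Γ'), u₂ = γ • u₁ ∧ u₂' = γ' • u₁' ∧ δ₂ = ρ γ * δ₁ * (ρ' γ')⁻¹ := by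
  constructor
  · rintro ⟨γ, γ', σ, σ', rfl, rfl, hσ, hσ', rfl⟩
    refine ⟨σ * γ, σ' * γ', by rw [mul_smul, hσ], by rw [mul_smul, hσ'], ?_⟩
    simp only [map_mul, mul_inv_rev, mul_assoc]
  · rintro ⟨γ, γ', hu, hu', hδ⟩
    exact ⟨γ, γ', 1, 1, hu, hu', one_smul _ _, one_smul _ _, by simp [hδ]⟩

variable (Δ) in
def fibreProductEquivTriples (f : U → V) (f' : U' → V) :
    {w : (U × U') × (V × Δ) // f w.1.1 = w.2.1 ∧ f' w.1.2 = w.2.2 • w.2.1} ≃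
      {t : U × U' × Δ // f' t.2.1 = t.2.2 • f t.1} where
  toFun w := ⟨(w.1.1.1, w.1.1.2, w.1.2.2), w.2.1 ▸ w.2.2⟩
  invFun t := ⟨((t.1.1, t.1.2.1), (f t.1.1, t.1.2.2)), rfl, t.2⟩
  left_inv w := Subtype.ext (Prod.ext rfl (Prod.ext w.2.1 rfl))
  right_inv _ := rfl

lemma fibreProduct_eq_smul_iff (ρ : Γ →* Δ) (ρ' : Γ' →* Δ) {f : U → V} {f' : U' → V}
    (hf : ∀ (γ : Γ) (u : U), f (γ • u) = ρ γ • f u)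
    (w₁ w₂ : {w : (U × U') × (V × Δ) // f w.1.1 = w.2.1 ∧ f' w.1.2 = w.2.2 • w.2.1})
    (γ : Γ) (γ' : Γ') :
    w₂.1 = ((γ • w₁.1.1.1, γ' • w₁.1.1.2), (ρ γ • w₁.1.2.1, ρ γ * w₁.1.2.2 * (ρ' γ')⁻¹)) ↔
      w₂.1.1.1 = γ • w₁.1.1.1 ∧ w₂.1.1.2 = γ' • w₁.1.1.2 ∧
        w₂.1.2.2 = ρ γ * w₁.1.2.2 * (ρ' γ')⁻¹ := by
  obtain ⟨⟨⟨u₁, u₁'⟩, v₁, δ₁⟩, hv₁ : f u₁ = v₁, -⟩ := w₁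
  obtain ⟨⟨⟨u₂, u₂'⟩, v₂, δ₂⟩, hv₂ : f u₂ = v₂, -⟩ := w₂
  subst hv₁ hv₂
  simp only [Prod.mk.injEq]
  constructor
  · rintro ⟨⟨hu, hu'⟩, -, hδ⟩
    exact ⟨hu, hu', hδ⟩
  · rintro ⟨rfl, rfl, hδ⟩
    exact ⟨⟨rfl, rfl⟩, hf γ u₁, hδ⟩

end

/-- Let finite groups `Γ, Γ', Δ` act on `U, U', V`, let `ρ : Γ → Δ`,
`ρ' : Γ' → Δ` be homomorphisms and `f : U → V`, `f' : U' → V` be `ρ`- resp.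
`ρ'`-equivariant.  Form `F = (U × U') ×_{f×f', V×V, π} (V × Δ)` with `π(v,δ) = (v, δ·v)`,
with the `Γ × Γ'`-action `((u,u'),(v,δ)) ↦ ((γ·u, γ'·u'), (ρ(γ)·v, ρ(γ) δ ρ'(γ')⁻¹))`.
Then there is a canonical bijection between the orbit set `F/(Γ × Γ')` and the set of
triples `(Γu, Γ'u', ρ(Stab_Γ(u)) δ ρ'(Stab_{Γ'}(u')))` with `f'(u') = δ·f(u)`, modulo the
evident equivalence (realised as the quotient of `S = {(u,u',δ) : f'(u') = δ·f(u)}` by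
the relation recording the `Γ`-orbit of `u`, the `Γ'`-orbit of `u'` and the stabilizer
double coset of `δ`). -/
theorem orbifold_fibre_product_orbits
    (Γ Γ' Δ : Type*) [Group Γ] [Group Γ'] [Group Δ]
    (U U' V : Type*) [MulAction Γ U] [MulAction Γ' U'] [MulAction Δ V]
    (ρ : Γ →* Δ) (ρ' : Γ' →* Δ)
    (f : U → V) (f' : U' → V)
    (hf : ∀ (γ : Γ) (u : U), f (γ • u) = ρ γ • f u)
    (rOrb : {w : (U × U') × (V × Δ) // f w.1.1 = w.2.1 ∧ f' w.1.2 = w.2.2 • w.2.1} →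
            {w : (U × U') × (V × Δ) // f w.1.1 = w.2.1 ∧ f' w.1.2 = w.2.2 • w.2.1} → Prop)
    (hrOrb : ∀ w₁ w₂, rOrb w₁ w₂ ↔ ∃ (γ : Γ) (γ' : Γ'),
        w₂.1 = ((γ • w₁.1.1.1, γ' • w₁.1.1.2),
           (ρ γ • w₁.1.2.1, ρ γ * w₁.1.2.2 * (ρ' γ')⁻¹)))
    (rTri : {t : U × U' × Δ // f' t.2.1 = t.2.2 • f t.1} →
            {t : U × U' × Δ // f' t.2.1 = t.2.2 • f t.1} → Prop)
    (hrTri : ∀ t₁ t₂, rTri t₁ t₂ ↔ ∃ (γ : Γ) (γ' : Γ') (σ : Γ) (σ' : Γ'),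
        t₂.1.1 = γ • t₁.1.1 ∧
        t₂.1.2.1 = γ' • t₁.1.2.1 ∧
        σ • t₂.1.1 = t₂.1.1 ∧
        σ' • t₂.1.2.1 = t₂.1.2.1 ∧
        t₂.1.2.2 = ρ σ * (ρ γ * t₁.1.2.2 * (ρ' γ')⁻¹) * (ρ' σ')⁻¹) :
    ∃ e : Quot rOrb ≃ Quot rTri,
      ∀ w, e (Quot.mk rOrb w) =
        Quot.mk rTri ⟨(w.1.1.1, w.1.1.2, w.1.2.2), by
          exact w.2.2.trans (by rw [w.2.1])⟩ := by
  have hrel : ∀ w₁ w₂, rOrb w₁ w₂ ↔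
      rTri (fibreProductEquivTriples Δ f f' w₁) (fibreProductEquivTriples Δ f f' w₂) := by
    intro w₁ w₂
    rw [hrOrb, hrTri, exists_smul_stabilizer_twist_iff]
    simp only [fibreProduct_eq_smul_iff ρ ρ' hf]
    rfl
  exact ⟨Quot.congr _ hrel, fun _ => rfl⟩
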